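/- Let γ : B → B be a holomorphic contraction at 0 (there exists C ∈ (0,1) with |γ(z)| ≤ C|z| on B). Then the image of the linear map β : O(B) → O(B), β(f) = f − f ∘ γ, is exactly the space of holomorphic functions on B vanishing at 0. In particular the image of β has codimension one in O(B). -/

import Mathlib

/-!
Since `‖γ z‖ ≤ C ‖z‖`, the iterates satisfy `‖γᵐ z‖ ≤ Cᵐ ‖z‖`, and by the Schwarz lemma a
holomorphic `g` with `g 0 = 0` is bounded by `M ‖w‖ / r` on a ball of radius `r` where `|g| ≤ M`.
Hence `g ∘ γᵐ` is bounded by `M Cᵐ` on each ball of radius `r < 1`, the series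
`f = ∑ₘ g ∘ γᵐ` converges locally uniformly, its sum is holomorphic (Cauchy estimates bound the
derivatives of the terms by a summable sequence), and `f - f ∘ γ = g` telescopes.
Conversely `γ 0 = 0` forces `g 0 = f 0 - f 0 = 0`.
-/

open Metric Set Function

/-- The series `f_g = ∑ₘ g ∘ γᵐ`; junk `0` at points where it diverges. -/
noncomputable def sumIterates {α G : Type*} [AddCommMonoid G] [TopologicalSpace G]
    (γ : α → α) (g : α → G) (z : α) : G :=
  ∑' m, g (γ^[m] z)

theorem sumIterates_sub_sumIterates_apply {α G : Type*} [AddCommGroup G] [TopologicalSpace G]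
    [IsTopologicalAddGroup G] [T2Space G] {γ : α → α} {g : α → G} {z : α}
    (hsum : Summable fun m => g (γ^[m] z)) :
    sumIterates γ g z - sumIterates γ g (γ z) = g z := by
  simp only [sumIterates, hsum.tsum_eq_zero_add, iterate_succ_apply, iterate_zero_apply,
    add_sub_cancel_right]

variable {E F : Type*} [NormedAddCommGroup E]

theorem mapsTo_ball_of_norm_le_mul_norm {γ : E → E} {C R r : ℝ} (hC1 : C ≤ 1)
    (hγ : ∀ z ∈ ball (0 : E) R, ‖γ z‖ ≤ C * ‖z‖) (hr : r ≤ R) :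
    MapsTo γ (ball 0 r) (ball 0 r) := fun z hz => by
  have hγz := hγ z (ball_subset_ball hr hz)
  rw [mem_ball_zero_iff] at hz ⊢
  nlinarith [norm_nonneg z]

theorem norm_iterate_le_pow_mul {γ : E → E} {C : ℝ} {s : Set E} (hC0 : 0 ≤ C)
    (hs : MapsTo γ s s) (hγ : ∀ z ∈ s, ‖γ z‖ ≤ C * ‖z‖) (m : ℕ) {z : E} (hz : z ∈ s) :
    ‖γ^[m] z‖ ≤ C ^ m * ‖z‖ := by
  induction m with
  | zero => simp
  | succ m ih =>
    rw [iterate_succ_apply', pow_succ', mul_assoc]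
    exact (hγ _ (hs.iterate m hz)).trans (mul_le_mul_of_nonneg_left ih hC0)

variable [NormedSpace ℂ E] [NormedAddCommGroup F] [NormedSpace ℂ F]

theorem norm_fderiv_le_of_forall_norm_le {f : E → F} {c : E} {r M : ℝ}
    (hf : DifferentiableOn ℂ f (ball c r)) (hM : ∀ w ∈ ball c r, ‖f w‖ ≤ M) (hr : 0 < r) :
    ‖fderiv ℂ f c‖ ≤ 2 * M / r := by
  refine Complex.norm_fderiv_le_div_of_mapsTo_ball hf (fun w hw => ?_) hr
  rw [mem_closedBall, dist_eq_norm]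
  linarith [norm_sub_le (f w) (f c), hM w hw, hM c (mem_ball_self hr)]

theorem differentiableOn_tsum_of_forall_norm_le [CompleteSpace F] {ι : Type*} {f : ι → E → F}
    {u : ι → ℝ} {U : Set E} (hu : Summable u) (hf : ∀ i, DifferentiableOn ℂ (f i) U)
    (hU : IsOpen U) (hle : ∀ i, ∀ w ∈ U, ‖f i w‖ ≤ u i) :
    DifferentiableOn ℂ (fun w => ∑' i, f i w) U := by
  intro x hx
  obtain ⟨ε, hε, hxε⟩ := Metric.isOpen_iff.mp hU x hx
  have hε2 : 0 < ε / 2 := half_pos hε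
  have hsub : ∀ y ∈ ball x (ε / 2), ball y (ε / 2) ⊆ U := fun y hy =>
    (ball_subset_ball' (by linarith [mem_ball.mp hy])).trans hxε
  have hderiv : ∀ i, ∀ y ∈ ball x (ε / 2), HasFDerivAt (f i) (fderiv ℂ (f i) y) y :=
    fun i y hy =>
      ((hf i).differentiableAt (hU.mem_nhds (hsub y hy (mem_ball_self hε2)))).hasFDerivAt
  have hbound : ∀ i, ∀ y ∈ ball x (ε / 2), ‖fderiv ℂ (f i) y‖ ≤ 2 * u i / (ε / 2) :=
    fun i y hy => norm_fderiv_le_of_forall_norm_le ((hf i).mono (hsub y hy))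
      (fun w hw => hle i w (hsub y hy hw)) hε2
  have hsum := hasFDerivAt_tsum_of_isPreconnected ((hu.mul_left 2).div_const _) isOpen_ball
    (convex_ball x _).isPreconnected hderiv hbound (mem_ball_self hε2)
    (.of_norm_bounded hu fun i => hle i x hx) (mem_ball_self hε2)
  exact hsum.differentiableAt.differentiableWithinAt

theorem norm_comp_iterate_le {γ : E → E} {g : E → F} {C M r : ℝ}
    (hg : DifferentiableOn ℂ g (ball 0 r)) (hg0 : g 0 = 0) (hM : ∀ w ∈ ball (0 : E) r, ‖g w‖ ≤ M)
    (hC0 : 0 ≤ C) (hC1 : C ≤ 1) (hγ : ∀ z ∈ ball (0 : E) r, ‖γ z‖ ≤ C * ‖z‖) (m : ℕ) {z : E}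
    (hz : z ∈ ball 0 r) : ‖g (γ^[m] z)‖ ≤ M * C ^ m := by
  have hmaps := mapsTo_ball_of_norm_le_mul_norm hC1 hγ le_rfl
  have hr : 0 < r := pos_of_mem_ball hz
  have hM0 : 0 ≤ M := (norm_nonneg _).trans (hM 0 (mem_ball_self hr))
  have hschwarz : ‖g (γ^[m] z)‖ ≤ M / r * ‖γ^[m] z‖ := by
    simpa [hg0] using Complex.dist_le_div_mul_dist_of_mapsTo_ball hg
      (fun w hw => by simpa [hg0] using hM w hw) (hmaps.iterate m hz)
  have hiter : ‖γ^[m] z‖ ≤ C ^ m * r :=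
    (norm_iterate_le_pow_mul hC0 hmaps hγ m hz).trans
      (mul_le_mul_of_nonneg_left (mem_ball_zero_iff.mp hz).le (pow_nonneg hC0 m))
  calc ‖g (γ^[m] z)‖ ≤ M / r * (C ^ m * r) :=
        hschwarz.trans (mul_le_mul_of_nonneg_left hiter (div_nonneg hM0 hr.le))
    _ = M * C ^ m := by field_simp

section Contraction

variable [ProperSpace E] {γ : E → E} {g : E → F} {C R : ℝ}

theorem exists_norm_comp_iterate_le (hg : DifferentiableOn ℂ g (ball 0 R)) (hg0 : g 0 = 0)
    (hC0 : 0 ≤ C) (hC1 : C ≤ 1) (hγ : ∀ z ∈ ball (0 : E) R, ‖γ z‖ ≤ C * ‖z‖) {r : ℝ}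
    (hr : r < R) : ∃ M, ∀ m, ∀ z ∈ ball (0 : E) r, ‖g (γ^[m] z)‖ ≤ M * C ^ m := by
  obtain ⟨M, hM⟩ := (isCompact_closedBall (0 : E) r).exists_bound_of_continuousOn
    (hg.continuousOn.mono (closedBall_subset_ball hr))
  exact ⟨M, fun m z hz => norm_comp_iterate_le (hg.mono (ball_subset_ball hr.le)) hg0
    (fun w hw => hM w (ball_subset_closedBall hw)) hC0 hC1
    (fun z hz => hγ z (ball_subset_ball hr.le hz)) m hz⟩

variable [CompleteSpace F]

theorem summable_comp_iterate (hg : DifferentiableOn ℂ g (ball 0 R)) (hg0 : g 0 = 0)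
    (hC0 : 0 ≤ C) (hC1 : C < 1) (hγ : ∀ z ∈ ball (0 : E) R, ‖γ z‖ ≤ C * ‖z‖) {z : E}
    (hz : z ∈ ball 0 R) : Summable fun m => g (γ^[m] z) := by
  obtain ⟨r, hzr, hr⟩ := exists_between (mem_ball_zero_iff.mp hz)
  obtain ⟨M, hM⟩ := exists_norm_comp_iterate_le hg hg0 hC0 hC1.le hγ hr
  exact .of_norm_bounded ((summable_geometric_of_lt_one hC0 hC1).mul_left M)
    fun m => hM m z (mem_ball_zero_iff.mpr hzr)

theorem differentiableOn_sumIterates (hγd : DifferentiableOn ℂ γ (ball 0 R))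
    (hg : DifferentiableOn ℂ g (ball 0 R)) (hg0 : g 0 = 0) (hC0 : 0 ≤ C) (hC1 : C < 1)
    (hγ : ∀ z ∈ ball (0 : E) R, ‖γ z‖ ≤ C * ‖z‖) :
    DifferentiableOn ℂ (sumIterates γ g) (ball 0 R) := by
  intro z hz
  obtain ⟨r, hzr, hr⟩ := exists_between (mem_ball_zero_iff.mp hz)
  obtain ⟨M, hM⟩ := exists_norm_comp_iterate_le hg hg0 hC0 hC1.le hγ hr
  have hmaps := mapsTo_ball_of_norm_le_mul_norm hC1.le hγ le_rfl
  have hterm : ∀ m, DifferentiableOn ℂ (fun w => g (γ^[m] w)) (ball 0 r) := fun m =>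
    (hg.comp (hγd.iterate hmaps m) (hmaps.iterate m)).mono (ball_subset_ball hr.le)
  have hsum := differentiableOn_tsum_of_forall_norm_le
    ((summable_geometric_of_lt_one hC0 hC1).mul_left M) hterm isOpen_ball hM
  exact (hsum.differentiableAt
    (isOpen_ball.mem_nhds (mem_ball_zero_iff.mpr hzr))).differentiableWithinAt

end Contraction

theorem image_of_beta_is_vanishing_at_zero_general
    (n : ℕ) (C : ℝ) (hC0 : 0 < C) (hC1 : C < 1)
    (γ : EuclideanSpace ℂ (Fin n) → EuclideanSpace ℂ (Fin n))
    (hγ : DifferentiableOn ℂ γ (ball 0 1))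
    (hbound : ∀ z ∈ ball (0 : EuclideanSpace ℂ (Fin n)) 1, ‖γ z‖ ≤ C * ‖z‖) :
    ∀ g : EuclideanSpace ℂ (Fin n) → ℂ, DifferentiableOn ℂ g (ball 0 1) →
      ((∃ f : EuclideanSpace ℂ (Fin n) → ℂ, DifferentiableOn ℂ f (ball 0 1) ∧
          ∀ z ∈ ball (0 : EuclideanSpace ℂ (Fin n)) 1, f z - f (γ z) = g z)
        ↔ g 0 = 0) := by
  intro g hg
  have hγ0 : γ 0 = 0 := norm_le_zero_iff.mp (by simpa using hbound 0 (mem_ball_self one_pos))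
  constructor
  · rintro ⟨f, -, hfg⟩
    simpa [hγ0] using (hfg 0 (mem_ball_self one_pos)).symm
  · intro hg0
    exact ⟨sumIterates γ g, differentiableOn_sumIterates hγ hg hg0 hC0.le hC1 hbound,
      fun z hz => sumIterates_sub_sumIterates_apply
        (summable_comp_iterate hg hg0 hC0.le hC1 hbound hz)⟩

/-- For a holomorphic contraction `γ` of the unit ball at `0`
(`‖γ z‖ ≤ C‖z‖`, `C ∈ (0,1)`), the image of the map `β(f) = f − f ∘ γ` on holomorphic
functions of the ball is exactly the space of holomorphic functions vanishing at `0`: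
a holomorphic `g` on the ball is of the form `f − f ∘ γ` (on the ball, with `f`
holomorphic) if and only if `g 0 = 0`. -/
theorem image_of_beta_is_vanishing_at_zero
    (n : ℕ) (C : ℝ) (hC0 : 0 < C) (hC1 : C < 1)
    (γ : EuclideanSpace ℂ (Fin n) → EuclideanSpace ℂ (Fin n))
    (hγ : DifferentiableOn ℂ γ (ball 0 1))
    (hmap : ∀ z ∈ ball (0 : EuclideanSpace ℂ (Fin n)) 1, γ z ∈ ball (0 : EuclideanSpace ℂ (Fin n)) 1)
    (hbound : ∀ z ∈ ball (0 : EuclideanSpace ℂ (Fin n)) 1, ‖γ z‖ ≤ C * ‖z‖) :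
    ∀ g : EuclideanSpace ℂ (Fin n) → ℂ, DifferentiableOn ℂ g (ball 0 1) →
      ((∃ f : EuclideanSpace ℂ (Fin n) → ℂ, DifferentiableOn ℂ f (ball 0 1) ∧
          ∀ z ∈ ball (0 : EuclideanSpace ℂ (Fin n)) 1, f z - f (γ z) = g z)
        ↔ g 0 = 0) :=
  image_of_beta_is_vanishing_at_zero_general n C hC0 hC1 γ hγ hbound
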